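/- Let q = p^s be a prime power, let n, m ≥ 1 be integers, let H ∈ F_q^{m×n} be a matrix, let u ∈ F_q^m, and let f : F_q^n → ℂ. Define g : F_q^n → ℂ by g(x) = Σ_{s ∈ F_q^m} conj(χ_s(u)) · f(x − sH). Then for every y ∈ F_q^n, the normalized Fourier transform of g satisfies g̃(y) = q^m · f̃(y) if Hy^⊤ = u, and g̃(y) = 0 otherwise. -/

import Mathlib

/-! With `ψ = e(tr(·)/p)` we have `χ_y(x) = ψ(x ⬝ᵥ y)`. Translating `f` by `sH` multiplies its
Fourier sum at `y` by `ψ(sH ⬝ᵥ y) = ψ(s ⬝ᵥ Hy)`, so `g̃(y) = (∑ₛ ψ(s ⬝ᵥ (Hy - u))) · f̃(y)`.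
Since the trace of `F / 𝔽_p` is onto, `ψ` is primitive, and the character sum is `q ^ m` if
`Hy = u` and `0` otherwise. -/

/-- The additive character `χ_y(x) = exp(2πi·tr(x·y)/p)` on `F^ι`, where
`tr : F → ZMod p` is the absolute trace and `x·y = Σ_i x_i y_i`. -/
noncomputable def addChar (p : ℕ) (F : Type*) [Field F] [Fintype F] [Algebra (ZMod p) F]
    {ι : Type*} [Fintype ι] (y x : ι → F) : ℂ :=
  Complex.exp (2 * Real.pi * Complex.I *
    ((Algebra.trace (ZMod p) F (∑ i, x i * y i)).val : ℂ) / p)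

open Matrix

namespace AddChar

lemma sum_mul_comp_sub {G M : Type*} [AddCommGroup G] [Fintype G] [CommSemiring M]
    (χ : AddChar G M) (f : G → M) (c : G) :
    ∑ x, χ x * f (x - c) = χ c * ∑ x, χ x * f x := by
  calc ∑ x, χ x * f (x - c) = ∑ x, χ (x + c) * f x :=
        (Fintype.sum_equiv (Equiv.addRight c) _ _ fun x => by simp).symm
    _ = χ c * ∑ x, χ x * f x := by
        simp only [map_add_eq_mul, Finset.mul_sum, mul_comm, mul_left_comm]

variable {R ι M : Type*} [CommRing R] [Fintype ι]

def compDotProduct [CommMonoid M] (ψ : AddChar R M) (v : ι → R) : AddChar (ι → R) M :=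
  ψ.compAddMonoidHom (AddMonoidHom.mk' (· ⬝ᵥ v) fun a b => add_dotProduct a b v)

@[simp]
lemma compDotProduct_apply [CommMonoid M] (ψ : AddChar R M) (v x : ι → R) :
    ψ.compDotProduct v x = ψ (x ⬝ᵥ v) :=
  rfl

lemma compDotProduct_eq_zero_iff [CommMonoid M] [DecidableEq ι] {ψ : AddChar R M}
    (hψ : ψ.IsPrimitive) {v : ι → R} :
    ψ.compDotProduct v = 0 ↔ v = 0 := by
  refine ⟨fun h => ?_, fun h => ?_⟩
  · by_contra hv
    obtain ⟨j, hj⟩ := Function.ne_iff.mp hv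
    obtain ⟨t, ht⟩ := ne_one_iff.mp (hψ hj)
    exact ht (by simpa [mul_comm] using congr($h (Pi.single j t)))
  · ext x
    simp [h]

lemma sum_compDotProduct [CommSemiring M] [IsDomain M] [DecidableEq ι] [Fintype R]
    [DecidableEq R] {ψ : AddChar R M} (hψ : ψ.IsPrimitive) (v : ι → R) :
    ∑ x : ι → R, ψ (x ⬝ᵥ v) =
      if v = 0 then (Fintype.card R : M) ^ Fintype.card ι else 0 := by
  simpa [compDotProduct_eq_zero_iff hψ] using (ψ.compDotProduct v).sum_eq_ite

lemma sum_mul_sum_conj_mul_sub_vecMul [Fintype R] [DecidableEq ι] {κ : Type*} [Fintype κ]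
    [DecidableEq κ] (ψ : AddChar R ℂ) (H : Matrix κ ι R) (u : κ → R) (y : ι → R)
    (f : (ι → R) → ℂ) :
    ∑ x, ψ (x ⬝ᵥ y) * ∑ s, starRingEnd ℂ (ψ (u ⬝ᵥ s)) * f (x - s ᵥ* H)
      = (∑ s, ψ (s ⬝ᵥ (H *ᵥ y - u))) * ∑ x, ψ (x ⬝ᵥ y) * f x := by
  calc ∑ x, ψ (x ⬝ᵥ y) * ∑ s, starRingEnd ℂ (ψ (u ⬝ᵥ s)) * f (x - s ᵥ* H)
      = ∑ s, ψ (-(u ⬝ᵥ s)) * ∑ x, ψ.compDotProduct y x * f (x - s ᵥ* H) := by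
        simp only [Finset.mul_sum, map_neg_eq_conj, compDotProduct_apply, mul_left_comm]
        exact Finset.sum_comm
    _ = ∑ s, ψ (-(u ⬝ᵥ s)) * (ψ (s ᵥ* H ⬝ᵥ y) * ∑ x, ψ (x ⬝ᵥ y) * f x) := by
        simp only [sum_mul_comp_sub]
        rfl
    _ = (∑ s, ψ (s ⬝ᵥ (H *ᵥ y - u))) * ∑ x, ψ (x ⬝ᵥ y) * f x := by
        simp only [Finset.sum_mul, ← mul_assoc, ← map_add_eq_mul, dotProduct_sub,
          ← dotProduct_mulVec, dotProduct_comm u, neg_add_eq_sub]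

end AddChar

section
variable (p : ℕ) [Fact p.Prime] (F : Type*) [Field F] [Fintype F] [Algebra (ZMod p) F]

noncomputable def traceAddChar : AddChar F ℂ :=
  ZMod.stdAddChar.compAddMonoidHom (Algebra.trace (ZMod p) F).toAddMonoidHom

lemma traceAddChar_isPrimitive : (traceAddChar p F).IsPrimitive := by
  refine AddChar.IsPrimitive.of_ne_one fun h => ?_
  obtain ⟨b, hb⟩ := Algebra.trace_surjective (ZMod p) F 1
  have : ZMod.stdAddChar (1 : ZMod p) = ZMod.stdAddChar (0 : ZMod p) := by
    simpa [traceAddChar, hb] using congr($h b)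
  exact one_ne_zero (ZMod.injective_stdAddChar this)

lemma addChar_eq_traceAddChar {ι : Type*} [Fintype ι] (y x : ι → F) :
    addChar p F y x = traceAddChar p F (x ⬝ᵥ y) := by
  rw [traceAddChar, AddChar.compAddMonoidHom_apply, LinearMap.toAddMonoidHom_coe,
    ← ZMod.natCast_zmod_val (Algebra.trace (ZMod p) F _), ← Int.cast_natCast,
    ZMod.stdAddChar_coe]
  rfl

end

theorem regev_fourier_identity_general (p : ℕ) [Fact p.Prime] (F : Type*) [Field F] [Fintype F]
    [DecidableEq F] [Algebra (ZMod p) F] (q : ℕ) (hq : Fintype.card F = q)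
    (n m : ℕ)
    (H : Matrix (Fin m) (Fin n) F) (u : Fin m → F)
    (f g : (Fin n → F) → ℂ)
    (hg : ∀ x : Fin n → F,
      g x = ∑ s : Fin m → F, (starRingEnd ℂ) (addChar p F s u) * f (x - Matrix.vecMul s H))
    (y : Fin n → F) :
    (1 / (Real.sqrt q : ℂ) ^ n) * ∑ x : Fin n → F, addChar p F y x * g x
      = if Matrix.mulVec H y = u then
          (q : ℂ) ^ m * ((1 / (Real.sqrt q : ℂ) ^ n) * ∑ x : Fin n → F, addChar p F y x * f x)
        else 0 := by
  simp only [hg, addChar_eq_traceAddChar, AddChar.sum_mul_sum_conj_mul_sub_vecMul,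
    AddChar.sum_compDotProduct (traceAddChar_isPrimitive p F), sub_eq_zero, hq, Fintype.card_fin]
  split_ifs <;> ring

/-- Core computation of Regev's reduction: for
`g(x) = Σ_{s∈F_q^m} conj(χ_s(u)) · f(x − sH)`, the normalized Fourier transform
satisfies `g̃(y) = q^m · f̃(y)` if `Hy = u` and `g̃(y) = 0` otherwise. -/
theorem regev_fourier_identity (p : ℕ) [Fact p.Prime] (F : Type*) [Field F] [Fintype F]
    [DecidableEq F] [Algebra (ZMod p) F] (q : ℕ) (hq : Fintype.card F = q)
    (n m : ℕ) (hn : 1 ≤ n) (hm : 1 ≤ m)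
    (H : Matrix (Fin m) (Fin n) F) (u : Fin m → F)
    (f g : (Fin n → F) → ℂ)
    (hg : ∀ x : Fin n → F,
      g x = ∑ s : Fin m → F, (starRingEnd ℂ) (addChar p F s u) * f (x - Matrix.vecMul s H))
    (y : Fin n → F) :
    (1 / (Real.sqrt q : ℂ) ^ n) * ∑ x : Fin n → F, addChar p F y x * g x
      = if Matrix.mulVec H y = u then
          (q : ℂ) ^ m * ((1 / (Real.sqrt q : ℂ) ^ n) * ∑ x : Fin n → F, addChar p F y x * f x)
        else 0 :=
  regev_fourier_identity_general p F q hq n m H u f g hg y
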